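/- arXiv:1009.4736 — 2 statements merged into one kernel-verified Lean document; each statement's English description precedes it below -/
import Mathlib

section
/- Let Π be a 3-decomposable 30-half-period. Then N_k^{bi}(Π) = 3k for every k = 1, 2, …, 10. -/
/-- An `n`-half-period: a sequence `π_0, …, π_{n(n-1)/2}` of arrangements of `n`
labeled elements in the positions `1, …, n` (recorded by `pos t x` = the position of
element `x` at time `t`), in which consecutive arrangements differ by a transposition
of the elements in two adjacent positions, and the last arrangement is the reverse of
the first. -/
structure HalfPeriod (n : ℕ) where
  pos : ℕ → Fin n → ℕ
  pos_mem : ∀ t, t ≤ n * (n - 1) / 2 → ∀ x, 1 ≤ pos t x ∧ pos t x ≤ n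
  pos_inj : ∀ t, t ≤ n * (n - 1) / 2 → Function.Injective (pos t)
  step : ∀ t, t < n * (n - 1) / 2 → ∃ x y : Fin n,
    pos t y = pos t x + 1 ∧ pos (t + 1) x = pos t x + 1 ∧ pos (t + 1) y = pos t x ∧
    ∀ z, z ≠ x → z ≠ y → pos (t + 1) z = pos t z
  reverse : ∀ x, pos (n * (n - 1) / 2) x = n + 1 - pos 0 x

namespace HalfPeriod

variable {n : ℕ}

/-- The number of transposition steps of an `n`-half-period. -/
def steps (n : ℕ) : ℕ := n * (n - 1) / 2

/-- Element `x` moves (changes position) at step `t`. -/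
def Moved (hp : HalfPeriod n) (t : ℕ) (x : Fin n) : Prop :=
  hp.pos (t + 1) x ≠ hp.pos t x

/-- Step `t` is the transposition of the (distinct) elements `x` and `y`. -/
def SwapsAt (hp : HalfPeriod n) (t : ℕ) (x y : Fin n) : Prop :=
  x ≠ y ∧ hp.Moved t x ∧ hp.Moved t y

/-- Step `t` is an `i`-transposition: it swaps the elements at positions `i` and `i+1`. -/
def GateAt (hp : HalfPeriod n) (t i : ℕ) : Prop :=
  ∃ x y : Fin n, hp.pos t x = i ∧ hp.pos t y = i + 1 ∧
    hp.pos (t + 1) x = i + 1 ∧ hp.pos (t + 1) y = i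

/-- Step `t` is an `i`-critical transposition: an `i`- or an `(n-i)`-transposition. -/
def Critical (hp : HalfPeriod n) (t i : ℕ) : Prop :=
  hp.GateAt t i ∨ hp.GateAt t (n - i)

/-- Step `t` is a `(≤ k)`-critical transposition. -/
def LeCritical (hp : HalfPeriod n) (t k : ℕ) : Prop :=
  ∃ i, 1 ≤ i ∧ i ≤ k ∧ hp.Critical t i

/-- `N_{≤ k}`: the number of `(≤ k)`-critical transpositions of the half-period. -/
noncomputable def NLe (hp : HalfPeriod n) (k : ℕ) : ℕ :=
  {t : ℕ | t < steps n ∧ hp.LeCritical t k}.ncard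

end HalfPeriod
/-- `hp` is a 3-decomposable `30`-half-period, witnessed by the labeling
`A = {a 0, …, a 9}`, `B = {b 0, …, b 9}`, `C = {c 0, …, c 9}` (the element with
1-indexed subscript `j` is `a (j-1)`, etc.): the initial arrangement is
`(a_10, a_9, …, a_1, b_1, …, b_10, c_1, …, c_10)`, every transposition between `A`
and `B` occurs before every transposition between `C` and `A ∪ B`, and every
transposition between `A` and `C` occurs before every transposition between `B`
and `C`. -/
def IsThreeDecompLabeling30 (hp : HalfPeriod 30) (a b c : Fin 10 → Fin 30) : Prop :=
  Function.Injective (Sum.elim a (Sum.elim b c)) ∧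
  (∀ i : Fin 10, hp.pos 0 (a i) = 10 - (i : ℕ)) ∧
  (∀ i : Fin 10, hp.pos 0 (b i) = 11 + (i : ℕ)) ∧
  (∀ i : Fin 10, hp.pos 0 (c i) = 21 + (i : ℕ)) ∧
  (∀ s t, s < HalfPeriod.steps 30 → t < HalfPeriod.steps 30 →
    (∃ i j, hp.SwapsAt s (a i) (b j)) →
    (∃ i x, ((∃ j, x = a j) ∨ (∃ j, x = b j)) ∧ hp.SwapsAt t (c i) x) → s < t) ∧
  (∀ s t, s < HalfPeriod.steps 30 → t < HalfPeriod.steps 30 →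
    (∃ i j, hp.SwapsAt s (a i) (c j)) →
    (∃ i j, hp.SwapsAt t (b i) (c j)) → s < t)

/-- `x` and `y` belong to the same one of the three classes `A`, `B`, `C`. -/
def SameClass (a b c : Fin 10 → Fin 30) (x y : Fin 30) : Prop :=
  (∃ i j, x = a i ∧ y = a j) ∨ (∃ i j, x = b i ∧ y = b j) ∨ (∃ i j, x = c i ∧ y = c j)
/-- `N_k^{bi}`: the number of bichromatic `k`-critical transpositions of `hp`. -/
noncomputable def NkBi (hp : HalfPeriod 30) (a b c : Fin 10 → Fin 30) (k : ℕ) : ℕ :=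
  {t : ℕ | t < HalfPeriod.steps 30 ∧ hp.Critical t k ∧
    ∃ x y, hp.SwapsAt t x y ∧ ¬ SameClass a b c x y}.ncard

/-!
Step `t` swaps `right t`, at position `gate t`, with `left t`, at `gate t + 1`. Every pair is
reversed at the end, and there are exactly as many steps as pairs, so every pair is swapped exactly
once, and always out of its initial order. The elements starting in the first `m` positions that
lie left of gate `w` decrease in number by one exactly at the steps at gate `w` that swap one of
them with an element starting beyond position `m`; comparing the start with the reversed end
shows there are `min m w - (m + w - n)` such steps.

A bichromatic step crosses the cut after initial position 10 (between `A` and `B ∪ C`) or the one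
after 20 (between `A ∪ B` and `C`). At a gate `k ≤ 10` no `A`–`C` swap happens, since by then
all of `B` has overtaken the element of `A`, so the two cuts contribute `k + k`. At the gate
`30 - k ≥ 20` no `A`–`B` swap happens, since no element of `C` has yet overtaken the element of
`B`, so only the second cut counts and contributes `k`.
-/

open Finset

namespace HalfPeriod

variable {n : ℕ} (hp : HalfPeriod n)

lemma pos_mem_Icc {T : ℕ} (hT : T ≤ steps n) (x : Fin n) : hp.pos T x ∈ Icc 1 n :=
  mem_Icc.mpr (hp.pos_mem T hT x)

lemma pos_injective {T : ℕ} (hT : T ≤ steps n) : Function.Injective (hp.pos T) :=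
  hp.pos_inj T hT

lemma pos_steps (x : Fin n) : hp.pos (steps n) x = n + 1 - hp.pos 0 x :=
  hp.reverse x

lemma image_pos_eq_Icc {T : ℕ} (hT : T ≤ steps n) : univ.image (hp.pos T) = Icc 1 n := by
  refine eq_of_subset_of_card_le (fun i hi => ?_) ?_
  · obtain ⟨x, -, rfl⟩ := mem_image.mp hi
    exact hp.pos_mem_Icc hT x
  · rw [card_image_of_injective _ (hp.pos_injective hT)]
    simp

lemma card_filter_pos {T : ℕ} (hT : T ≤ steps n) (P : ℕ → Prop) [DecidablePred P] :
    #{x | P (hp.pos T x)} = #{i ∈ Icc 1 n | P i} := by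
  rw [← hp.image_pos_eq_Icc hT, filter_image, card_image_of_injective _ (hp.pos_injective hT)]

lemma card_lt_pos_of_forall_pos_lt {T : ℕ} (hT : T ≤ steps n) {S : Finset (Fin n)} {x : Fin n}
    (hS : ∀ y ∈ S, hp.pos T y < hp.pos T x) : #S < hp.pos T x := by
  have hx := mem_Icc.mp (hp.pos_mem_Icc hT x)
  calc #S ≤ #{y | hp.pos T y < hp.pos T x} := card_le_card fun y hy => by simpa using hS y hy
    _ = #{i ∈ Icc 1 n | i < hp.pos T x} := hp.card_filter_pos hT (· < hp.pos T x)
    _ ≤ #(Ico 1 (hp.pos T x)) := card_le_card fun i hi => by simp at hi ⊢; omega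
    _ < hp.pos T x := by rw [Nat.card_Ico]; omega

lemma card_add_pos_le_of_forall_pos_lt {T : ℕ} (hT : T ≤ steps n) {S : Finset (Fin n)}
    {x : Fin n} (hS : ∀ y ∈ S, hp.pos T x < hp.pos T y) : #S + hp.pos T x ≤ n := by
  have hx := mem_Icc.mp (hp.pos_mem_Icc hT x)
  have : #S ≤ n - hp.pos T x :=
    calc #S ≤ #{y | hp.pos T x < hp.pos T y} := card_le_card fun y hy => by simpa using hS y hy
      _ = #{i ∈ Icc 1 n | hp.pos T x < i} := hp.card_filter_pos hT (hp.pos T x < ·)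
      _ ≤ #(Ioc (hp.pos T x) n) := card_le_card fun i hi => by simp at hi ⊢; omega
      _ = n - hp.pos T x := Nat.card_Ioc _ _
  omega

/-- At step `t` the element `hp.right t` moves from position `hp.gate t` to `hp.gate t + 1`
and `hp.left t` from `hp.gate t + 1` to `hp.gate t`. -/
noncomputable def right (t : Fin (steps n)) : Fin n := (hp.step t t.isLt).choose

noncomputable def left (t : Fin (steps n)) : Fin n := (hp.step t t.isLt).choose_spec.choose

noncomputable def gate (t : Fin (steps n)) : ℕ := hp.pos t (hp.right t)

section Step

variable (t : Fin (steps n))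

lemma pos_left : hp.pos t (hp.left t) = hp.gate t + 1 :=
  (hp.step t t.isLt).choose_spec.choose_spec.1

lemma pos_succ_right : hp.pos (t + 1) (hp.right t) = hp.gate t + 1 :=
  (hp.step t t.isLt).choose_spec.choose_spec.2.1

lemma pos_succ_left : hp.pos (t + 1) (hp.left t) = hp.gate t :=
  (hp.step t t.isLt).choose_spec.choose_spec.2.2.1

lemma pos_succ_of_ne {x : Fin n} (hr : x ≠ hp.right t) (hl : x ≠ hp.left t) :
    hp.pos (t + 1) x = hp.pos t x :=
  (hp.step t t.isLt).choose_spec.choose_spec.2.2.2 x hr hl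

lemma right_ne_left : hp.right t ≠ hp.left t := fun h => by
  have := hp.pos_left t
  rw [← h, gate] at this
  omega

lemma pos_ne_gate_of_ne {x : Fin n} (hr : x ≠ hp.right t) : hp.pos t x ≠ hp.gate t :=
  fun h => hr (hp.pos_injective t.isLt.le h)

lemma pos_ne_gate_succ_of_ne {x : Fin n} (hl : x ≠ hp.left t) : hp.pos t x ≠ hp.gate t + 1 :=
  fun h => hl (hp.pos_injective t.isLt.le (h.trans (hp.pos_left t).symm))

lemma moved_iff {x : Fin n} : hp.Moved t x ↔ x = hp.right t ∨ x = hp.left t := by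
  refine ⟨fun hx => ?_, ?_⟩
  · by_contra! h
    exact hx (hp.pos_succ_of_ne t h.1 h.2)
  · rintro (rfl | rfl)
    · simp [Moved, hp.pos_succ_right, gate]
    · simp [Moved, hp.pos_succ_left, hp.pos_left]

noncomputable def swapPair : Sym2 (Fin n) := s(hp.right t, hp.left t)

lemma swapsAt_iff {x y : Fin n} : hp.SwapsAt t x y ↔ hp.swapPair t = s(x, y) := by
  simp only [SwapsAt, moved_iff, swapPair, Sym2.eq_iff]
  have := hp.right_ne_left t
  constructor
  · rintro ⟨hxy, rfl | rfl, rfl | rfl⟩ <;> simp_all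
  · rintro (⟨rfl, rfl⟩ | ⟨rfl, rfl⟩) <;> simp_all [ne_comm]

lemma exists_swapsAt_and_iff {Q : Fin n → Fin n → Prop} :
    (∃ x y, hp.SwapsAt t x y ∧ Q x y) ↔
      Q (hp.right t) (hp.left t) ∨ Q (hp.left t) (hp.right t) := by
  simp only [swapsAt_iff, swapPair, Sym2.eq_iff]
  constructor
  · rintro ⟨x, y, ⟨rfl, rfl⟩ | ⟨rfl, rfl⟩, hQ⟩ <;> simp [hQ]
  · rintro (hQ | hQ)
    · exact ⟨_, _, Or.inl ⟨rfl, rfl⟩, hQ⟩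
    · exact ⟨_, _, Or.inr ⟨rfl, rfl⟩, hQ⟩

lemma gateAt_iff {w : ℕ} : hp.GateAt t w ↔ hp.gate t = w := by
  refine ⟨fun ⟨x, y, hx, hy, hx', hy'⟩ => ?_, fun h => ?_⟩
  · by_contra hne
    have hr : x ≠ hp.right t := by rintro rfl; exact hne hx
    have hl : x ≠ hp.left t := by
      rintro rfl
      rw [hp.pos_left] at hx
      rw [hp.pos_succ_left] at hx'
      omega
    rw [hp.pos_succ_of_ne t hr hl] at hx'
    omega
  · exact ⟨hp.right t, hp.left t, h, by rw [pos_left, h], by rw [pos_succ_right, h],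
      by rw [pos_succ_left, h]⟩

lemma critical_iff {i : ℕ} : hp.Critical t i ↔ hp.gate t = i ∨ hp.gate t = n - i := by
  rw [Critical, gateAt_iff, gateAt_iff]

lemma pos_cases (x : Fin n) :
    (x = hp.right t ∧ hp.pos t x = hp.gate t ∧ hp.pos (t + 1) x = hp.gate t + 1) ∨
    (x = hp.left t ∧ hp.pos t x = hp.gate t + 1 ∧ hp.pos (t + 1) x = hp.gate t) ∨
    (x ≠ hp.right t ∧ x ≠ hp.left t ∧ hp.pos (t + 1) x = hp.pos t x ∧
      hp.pos t x ≠ hp.gate t ∧ hp.pos t x ≠ hp.gate t + 1) := by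
  by_cases hr : x = hp.right t
  · subst hr; exact Or.inl ⟨rfl, rfl, hp.pos_succ_right t⟩
  by_cases hl : x = hp.left t
  · subst hl; exact Or.inr (Or.inl ⟨rfl, hp.pos_left t, hp.pos_succ_left t⟩)
  exact Or.inr (Or.inr ⟨hr, hl, hp.pos_succ_of_ne t hr hl, hp.pos_ne_gate_of_ne t hr,
    hp.pos_ne_gate_succ_of_ne t hl⟩)

end Step

lemma pos_lt_pos_succ_iff_of_swapPair_ne (t : Fin (steps n)) {u v : Fin n}
    (h : hp.swapPair t ≠ s(u, v)) :
    hp.pos (t + 1) u < hp.pos (t + 1) v ↔ hp.pos t u < hp.pos t v := by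
  rcases hp.pos_cases t u with ⟨rfl, hu⟩ | ⟨rfl, hu⟩ | hu <;>
    rcases hp.pos_cases t v with ⟨rfl, hv⟩ | ⟨rfl, hv⟩ | hv <;>
    first | omega | exact absurd rfl h | exact absurd Sym2.eq_swap h

lemma pos_lt_pos_iff_of_forall_swapPair_ne {u v : Fin n} {T T' : ℕ} (hTT' : T ≤ T')
    (hT' : T' ≤ steps n)
    (h : ∀ t : Fin (steps n), T ≤ t → (t : ℕ) < T' → hp.swapPair t ≠ s(u, v)) :
    hp.pos T' u < hp.pos T' v ↔ hp.pos T u < hp.pos T v := by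
  induction T', hTT' using Nat.le_induction with
  | base => rfl
  | succ T' hTT' ih =>
    rw [← ih (by omega) fun t h₁ h₂ => h t h₁ (by omega)]
    exact hp.pos_lt_pos_succ_iff_of_swapPair_ne ⟨T', by omega⟩
      (h ⟨T', by omega⟩ hTT' (Nat.lt_succ_self T'))

lemma exists_swapPair_eq {u v : Fin n} (huv : u ≠ v) : ∃ t, hp.swapPair t = s(u, v) := by
  by_contra! h
  have hrev := hp.pos_lt_pos_iff_of_forall_swapPair_ne (T := 0) (Nat.zero_le _) le_rfl
    fun t _ _ => h t
  have hne : hp.pos 0 u ≠ hp.pos 0 v := (hp.pos_injective (Nat.zero_le _)).ne huv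
  have hu := mem_Icc.mp (hp.pos_mem_Icc (Nat.zero_le _) u)
  have hv := mem_Icc.mp (hp.pos_mem_Icc (Nat.zero_le _) v)
  rw [pos_steps, pos_steps] at hrev
  omega

/-- Every pair is swapped at least once and there are exactly `n.choose 2` steps,
so every pair is swapped exactly once. -/
lemma swapPair_injective : Function.Injective hp.swapPair := by
  classical
  let f : Fin (steps n) → {p : Sym2 (Fin n) // ¬ p.IsDiag} :=
    fun t => ⟨hp.swapPair t, by simpa [swapPair] using hp.right_ne_left t⟩
  have hf : Function.Bijective f := by
    refine (Fintype.bijective_iff_surjective_and_card f).mpr ⟨?_, ?_⟩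
    · rintro ⟨p, hp'⟩
      induction p using Sym2.ind with
      | _ u v =>
        obtain ⟨t, ht⟩ := hp.exists_swapPair_eq (by simpa using hp')
        exact ⟨t, Subtype.ext ht⟩
    · rw [Sym2.card_subtype_not_diag, Fintype.card_fin, Fintype.card_fin, Nat.choose_two_right]
      rfl
  exact fun s t hst => hf.1 (Subtype.ext hst)

section SwapOrder

variable {t : Fin (steps n)} {u v : Fin n} (ht : hp.swapPair t = s(u, v))
include ht

lemma pos_lt_pos_iff_of_le_swap {T : ℕ} (hT : T ≤ t) :
    hp.pos T u < hp.pos T v ↔ hp.pos 0 u < hp.pos 0 v :=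
  hp.pos_lt_pos_iff_of_forall_swapPair_ne (Nat.zero_le T) (hT.trans t.isLt.le)
    fun s _ hs heq => by
      have : s = t := hp.swapPair_injective (heq.trans ht.symm)
      omega

lemma pos_lt_pos_iff_of_swap_lt {T : ℕ} (hT : t < T) (hTN : T ≤ steps n) :
    hp.pos T u < hp.pos T v ↔ hp.pos 0 v < hp.pos 0 u := by
  have hlater : hp.pos T u < hp.pos T v ↔ hp.pos (t + 1) u < hp.pos (t + 1) v :=
    hp.pos_lt_pos_iff_of_forall_swapPair_ne hT hTN fun s hs _ heq => by
      have : s = t := hp.swapPair_injective (heq.trans ht.symm)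
      omega
  have hflip : hp.pos (t + 1) u < hp.pos (t + 1) v ↔ hp.pos t v < hp.pos t u := by
    rcases Sym2.eq_iff.mp ht with ⟨hu, hv⟩ | ⟨hv, hu⟩ <;> subst hu hv <;>
      simp only [pos_succ_right, pos_succ_left, pos_left, gate]
  rw [hlater, hflip, hp.pos_lt_pos_iff_of_le_swap (ht.trans Sym2.eq_swap) le_rfl]

end SwapOrder

lemma pos_zero_right_lt_left (t : Fin (steps n)) : hp.pos 0 (hp.right t) < hp.pos 0 (hp.left t) :=
  (hp.pos_lt_pos_iff_of_le_swap rfl le_rfl).mp (by rw [pos_left, gate]; omega)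

section Flow

variable (X : Finset (Fin n)) (w : ℕ)

lemma ite_pos_le_add_ite (t : Fin (steps n)) (x : Fin n) :
    (if hp.pos t x ≤ w then 1 else 0) + (if hp.gate t = w ∧ hp.left t = x then 1 else 0) =
      (if hp.pos (t + 1) x ≤ w then 1 else 0) +
        (if hp.gate t = w ∧ hp.right t = x then 1 else 0) := by
  have := hp.right_ne_left t
  rcases hp.pos_cases t x with ⟨rfl, h, h'⟩ | ⟨rfl, h, h'⟩ | ⟨hr, hl, h', h, h''⟩
  · simp only [h, h', this.symm, and_false, and_true, if_false]
    split_ifs <;> omega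
  · simp only [h, h', this, and_false, and_true, if_false]
    split_ifs <;> omega
  · simp only [h', Ne.symm hr, Ne.symm hl, and_false, if_false]

lemma card_pos_le_add_ite (t : Fin (steps n)) :
    #{x ∈ X | hp.pos t x ≤ w} + (if hp.gate t = w ∧ hp.left t ∈ X then 1 else 0) =
      #{x ∈ X | hp.pos (t + 1) x ≤ w} +
        (if hp.gate t = w ∧ hp.right t ∈ X then 1 else 0) := by
  have hsum : ∀ y : Fin n, ∑ x ∈ X, (if hp.gate t = w ∧ y = x then 1 else 0) =
      if hp.gate t = w ∧ y ∈ X then 1 else 0 := by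
    intro y
    by_cases hg : hp.gate t = w <;> simp [hg, sum_ite_eq]
  rw [card_filter, card_filter, ← hsum, ← hsum, ← sum_add_distrib, ← sum_add_distrib]
  exact sum_congr rfl fun x _ => hp.ite_pos_le_add_ite w t x

/-- Conservation of the number of elements of `X` on the left of gate `w`: each step at gate `w`
moves `hp.right t` out of that side and `hp.left t` into it. -/
lemma card_pos_zero_le_add_card :
    #{x ∈ X | hp.pos 0 x ≤ w} + #{t | hp.gate t = w ∧ hp.left t ∈ X} =
      #{x ∈ X | hp.pos (steps n) x ≤ w} + #{t | hp.gate t = w ∧ hp.right t ∈ X} := by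
  let c : ℕ → ℤ := fun T => #{x ∈ X | hp.pos T x ≤ w}
  have hstep : ∀ t : Fin (steps n), c t - c (t + 1) =
      (if hp.gate t = w ∧ hp.right t ∈ X then 1 else 0) -
        (if hp.gate t = w ∧ hp.left t ∈ X then 1 else 0) := fun t => by
    have := hp.card_pos_le_add_ite X w t
    simp only [c]
    split_ifs at this ⊢ <;> omega
  have htel : c 0 - c (steps n) = ∑ t : Fin (steps n), (c t - c (t + 1)) := by
    rw [Fin.sum_univ_eq_sum_range (fun T => c T - c (T + 1)), sum_range_sub']
  rw [sum_congr rfl fun t _ => hstep t, sum_sub_distrib, sum_boole, sum_boole] at htel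
  simp only [c] at htel
  omega

end Flow

noncomputable def cutCrossings (m w : ℕ) : Finset (Fin (steps n)) :=
  {t | hp.gate t = w ∧ hp.pos 0 (hp.right t) ≤ m ∧ m < hp.pos 0 (hp.left t)}

lemma card_cutCrossings {m w : ℕ} (hm : m ≤ n) (hw : w ≤ n) :
    #(hp.cutCrossings m w) = min m w - (m + w - n) := by
  let X : Finset (Fin n) := {x | hp.pos 0 x ≤ m}
  have hflow := hp.card_pos_zero_le_add_card X w
  have hright : #{t | hp.gate t = w ∧ hp.right t ∈ X} =
      #{t | hp.gate t = w ∧ hp.left t ∈ X} + #(hp.cutCrossings m w) := by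
    rw [← card_filter_add_card_filter_not (fun t => hp.left t ∈ X), filter_filter,
      filter_filter]
    congr 2 <;> ext t
    · have := hp.pos_zero_right_lt_left t
      simp only [X, mem_filter, mem_univ, true_and]
      omega
    · simp [X, cutCrossings, and_assoc]
  have hstart : #{x ∈ X | hp.pos 0 x ≤ w} = min m w := by
    rw [filter_filter, hp.card_filter_pos (Nat.zero_le _) (fun i => i ≤ m ∧ i ≤ w)]
    trans #(Icc 1 (min m w))
    · congr 1
      ext i
      simp only [mem_filter, mem_Icc]
      omega
    · simp
  have hend : #{x ∈ X | hp.pos (steps n) x ≤ w} = m + w - n := by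
    simp only [X, filter_filter, pos_steps]
    rw [hp.card_filter_pos (Nat.zero_le _) (fun i => i ≤ m ∧ n + 1 - i ≤ w)]
    trans #(Icc (n + 1 - w) m)
    · congr 1
      ext i
      simp only [mem_filter, mem_Icc]
      omega
    · simp only [Nat.card_Icc]
      omega
  omega

lemma disjoint_cutCrossings_of_ne {m m' w w' : ℕ} (hw : w ≠ w') :
    Disjoint (hp.cutCrossings m w) (hp.cutCrossings m' w') :=
  disjoint_filter.mpr fun _ _ h h' => hw (h.1.symm.trans h'.1)

lemma ncard_setOf_lt_steps_eq_card {P : ℕ → Prop} {S : Finset (Fin (steps n))}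
    (hS : ∀ t : Fin (steps n), P t ↔ t ∈ S) :
    {t : ℕ | t < steps n ∧ P t}.ncard = #S := by
  rw [← card_map Fin.valEmbedding, ← Set.ncard_coe_finset]
  congr 1
  ext t
  simp only [Set.mem_ofPred_eq, coe_map, Set.mem_image, mem_coe, Fin.valEmbedding_apply]
  exact ⟨fun ⟨ht, hP⟩ => ⟨⟨t, ht⟩, (hS _).mp hP, rfl⟩,
    fun ⟨t', hP, h⟩ => h ▸ ⟨t'.isLt, (hS t').mpr hP⟩⟩

end HalfPeriod

section ThreeDecomposable

open HalfPeriod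

variable {hp : HalfPeriod 30} {a b c : Fin 10 → Fin 30} (h3 : IsThreeDecompLabeling30 hp a b c)
include h3

lemma IsThreeDecompLabeling30.exists_eq_a_iff (x : Fin 30) :
    (∃ i, x = a i) ↔ hp.pos 0 x ≤ 10 := by
  refine ⟨fun ⟨i, hi⟩ => by rw [hi, h3.2.1 i]; omega, fun hx => ?_⟩
  have := mem_Icc.mp (hp.pos_mem_Icc (Nat.zero_le _) x)
  refine ⟨⟨10 - hp.pos 0 x, by omega⟩, hp.pos_injective (Nat.zero_le _) ?_⟩
  rw [h3.2.1, Fin.val_mk]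
  omega

lemma IsThreeDecompLabeling30.exists_eq_b_iff (x : Fin 30) :
    (∃ i, x = b i) ↔ 10 < hp.pos 0 x ∧ hp.pos 0 x ≤ 20 := by
  refine ⟨fun ⟨i, hi⟩ => by rw [hi, h3.2.2.1 i]; omega, fun hx => ?_⟩
  refine ⟨⟨hp.pos 0 x - 11, by omega⟩, hp.pos_injective (Nat.zero_le _) ?_⟩
  rw [h3.2.2.1, Fin.val_mk]
  omega

lemma IsThreeDecompLabeling30.exists_eq_c_iff (x : Fin 30) :
    (∃ i, x = c i) ↔ 20 < hp.pos 0 x := by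
  refine ⟨fun ⟨i, hi⟩ => by rw [hi, h3.2.2.2.1 i]; omega, fun hx => ?_⟩
  have := mem_Icc.mp (hp.pos_mem_Icc (Nat.zero_le _) x)
  refine ⟨⟨hp.pos 0 x - 21, by omega⟩, hp.pos_injective (Nat.zero_le _) ?_⟩
  rw [h3.2.2.2.1, Fin.val_mk]
  omega

lemma IsThreeDecompLabeling30.sameClass_iff (x y : Fin 30) :
    SameClass a b c x y ↔
      (hp.pos 0 x ≤ 10 ↔ hp.pos 0 y ≤ 10) ∧ (hp.pos 0 x ≤ 20 ↔ hp.pos 0 y ≤ 20) := by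
  simp only [SameClass, exists_and_left, exists_and_right, h3.exists_eq_a_iff, h3.exists_eq_b_iff,
    h3.exists_eq_c_iff]
  omega

lemma IsThreeDecompLabeling30.exists_swapsAt_not_sameClass_iff (t : Fin (steps 30)) :
    (∃ x y, hp.SwapsAt t x y ∧ ¬ SameClass a b c x y) ↔
      hp.pos 0 (hp.right t) ≤ 10 ∧ 10 < hp.pos 0 (hp.left t) ∨
        hp.pos 0 (hp.right t) ≤ 20 ∧ 20 < hp.pos 0 (hp.left t) := by
  rw [exists_swapsAt_and_iff, h3.sameClass_iff, h3.sameClass_iff]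
  have := hp.pos_zero_right_lt_left t
  omega

/-- When an element of `A` and one of `C` are swapped, all of `B` has already passed the
element of `A`. -/
lemma IsThreeDecompLabeling30.ten_lt_gate_of_a_c_swap (t : Fin (steps 30))
    (hr : hp.pos 0 (hp.right t) ≤ 10) (hl : 20 < hp.pos 0 (hp.left t)) : 10 < hp.gate t := by
  obtain ⟨i, hi⟩ := (h3.exists_eq_a_iff _).mpr hr
  obtain ⟨j, hj⟩ := (h3.exists_eq_c_iff _).mpr hl
  have hB : #{y | 10 < hp.pos 0 y ∧ hp.pos 0 y ≤ 20} = 10 :=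
    (hp.card_filter_pos (Nat.zero_le _) (fun p => 10 < p ∧ p ≤ 20)).trans (by decide)
  have hpassed : ∀ y ∈ ({y | 10 < hp.pos 0 y ∧ hp.pos 0 y ≤ 20} : Finset (Fin 30)),
      hp.pos t y < hp.pos t (hp.right t) := by
    intro y hy
    obtain ⟨m, rfl⟩ := (h3.exists_eq_b_iff y).mpr (by simpa using hy)
    obtain ⟨s, hs⟩ := hp.exists_swapPair_eq (u := b m) (v := a i) fun h => by
      have := congrArg (hp.pos 0) h
      rw [h3.2.1 i, h3.2.2.1 m] at this
      omega
    have hst : s < t := h3.2.2.2.2.1 s t s.isLt t.isLt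
      ⟨i, m, (hp.swapsAt_iff s).mpr (hs.trans Sym2.eq_swap)⟩
      ⟨j, a i, Or.inl ⟨i, rfl⟩,
        (hp.swapsAt_iff t).mpr (by rw [swapPair, hi, hj, Sym2.eq_swap])⟩
    rw [hi, hp.pos_lt_pos_iff_of_swap_lt hs hst t.isLt.le, h3.2.1 i, h3.2.2.1 m]
    omega
  have := hp.card_lt_pos_of_forall_pos_lt t.isLt.le hpassed
  rwa [hB] at this

/-- When an element of `A` and one of `B` are swapped, no element of `C` has yet passed the
element of `B`. -/
lemma IsThreeDecompLabeling30.gate_lt_twenty_of_a_b_swap (t : Fin (steps 30))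
    (hr : hp.pos 0 (hp.right t) ≤ 10) (hl : 10 < hp.pos 0 (hp.left t))
    (hl' : hp.pos 0 (hp.left t) ≤ 20) : hp.gate t < 20 := by
  obtain ⟨i, hi⟩ := (h3.exists_eq_a_iff _).mpr hr
  obtain ⟨j, hj⟩ := (h3.exists_eq_b_iff _).mpr ⟨hl, hl'⟩
  have hC : #{y | 20 < hp.pos 0 y} = 10 :=
    (hp.card_filter_pos (Nat.zero_le _) (20 < ·)).trans (by decide)
  have hahead : ∀ z ∈ ({y | 20 < hp.pos 0 y} : Finset (Fin 30)),
      hp.pos t (hp.left t) < hp.pos t z := by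
    intro z hz
    obtain ⟨m, rfl⟩ := (h3.exists_eq_c_iff z).mpr (by simpa using hz)
    obtain ⟨s, hs⟩ := hp.exists_swapPair_eq (u := b j) (v := c m) fun h => by
      have := congrArg (hp.pos 0) h
      rw [h3.2.2.1 j, h3.2.2.2.1 m] at this
      omega
    have hts : t < s := h3.2.2.2.2.1 t s t.isLt s.isLt
      ⟨i, j, (hp.swapsAt_iff t).mpr (by rw [swapPair, hi, hj])⟩
      ⟨m, b j, Or.inr ⟨j, rfl⟩, (hp.swapsAt_iff s).mpr (hs.trans Sym2.eq_swap)⟩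
    rw [hj, hp.pos_lt_pos_iff_of_le_swap hs hts.le, h3.2.2.1 j, h3.2.2.2.1 m]
    omega
  have := hp.card_add_pos_le_of_forall_pos_lt t.isLt.le hahead
  rw [hC, pos_left] at this
  omega

lemma IsThreeDecompLabeling30.disjoint_cutCrossings {k : ℕ} (hk : k ≤ 10) :
    Disjoint (hp.cutCrossings 10 k) (hp.cutCrossings 20 k) :=
  disjoint_filter.mpr fun t _ h h' => by
    have := h3.ten_lt_gate_of_a_c_swap t h.2.1 h'.2.2
    omega

lemma IsThreeDecompLabeling30.cutCrossings_subset {w : ℕ} (hw : 20 ≤ w) :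
    hp.cutCrossings 10 w ⊆ hp.cutCrossings 20 w := fun t ht => by
  simp only [cutCrossings, mem_filter, mem_univ, true_and] at ht ⊢
  by_cases hl : hp.pos 0 (hp.left t) ≤ 20
  · have := h3.gate_lt_twenty_of_a_b_swap t ht.2.1 ht.2.2 hl
    omega
  · omega

lemma IsThreeDecompLabeling30.critical_bichromatic_iff {k : ℕ} (hk : k ≤ 10)
    (t : Fin (steps 30)) :
    (hp.Critical t k ∧ ∃ x y, hp.SwapsAt t x y ∧ ¬ SameClass a b c x y) ↔
      t ∈ hp.cutCrossings 10 k ∪ hp.cutCrossings 20 k ∪ hp.cutCrossings 20 (30 - k) := by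
  rw [← union_eq_right.mpr (h3.cutCrossings_subset (w := 30 - k) (by omega)), ← union_assoc]
  simp only [mem_union, cutCrossings, mem_filter, mem_univ, true_and, critical_iff,
    h3.exists_swapsAt_not_sameClass_iff]
  omega

end ThreeDecomposable

/-- If `Π` is a 3-decomposable 30-half-period, then
`N_k^{bi}(Π) = 3k` for every `k = 1, 2, …, 10`. -/
theorem bichromatic_count_low (hp : HalfPeriod 30) (a b c : Fin 10 → Fin 30)
    (h3 : IsThreeDecompLabeling30 hp a b c) :
    ∀ k : ℕ, 1 ≤ k → k ≤ 10 → NkBi hp a b c k = 3 * k := by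
  intro k hk1 hk10
  have hgates :
      Disjoint (hp.cutCrossings 10 k ∪ hp.cutCrossings 20 k) (hp.cutCrossings 20 (30 - k)) :=
    disjoint_union_left.mpr
      ⟨hp.disjoint_cutCrossings_of_ne (by omega), hp.disjoint_cutCrossings_of_ne (by omega)⟩
  rw [NkBi, HalfPeriod.ncard_setOf_lt_steps_eq_card (h3.critical_bichromatic_iff hk10),
    card_union_of_disjoint hgates, card_union_of_disjoint (h3.disjoint_cutCrossings hk10),
    hp.card_cutCrossings, hp.card_cutCrossings, hp.card_cutCrossings] <;> omega
end

section
/- If D is a digraph in the class D_{10,3} with exactly 33 edges, then for all i, j ∈ {7, 8, 9, 10} with i > j, the edge from i to j is present in D. -/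
/-- The outdegree of vertex `i` in the digraph with edge relation `E`. -/
noncomputable def outDeg (E : ℕ → ℕ → Prop) (i : ℕ) : ℕ := {j : ℕ | E i j}.ncard

/-- The indegree of vertex `i` in the digraph with edge relation `E`. -/
noncomputable def inDeg (E : ℕ → ℕ → Prop) (i : ℕ) : ℕ := {j : ℕ | E j i}.ncard

/-- `E` is (the edge relation of) a digraph in the class `𝒟_{v,m}`: the vertex set is
`{1, …, v}`, every edge goes from a larger vertex to a smaller one, and every vertex `i`
satisfies `outdeg(i) ≤ m + indeg(i)`. -/
def MemClassD (v m : ℕ) (E : ℕ → ℕ → Prop) : Prop :=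
  (∀ i j, E i j → 1 ≤ j ∧ j < i ∧ i ≤ v) ∧
  (∀ i, 1 ≤ i → i ≤ v → outDeg E i ≤ m + inDeg E i)

/-! Vertex `a` of a digraph in `𝒟_{v,m}` has at most `a - 1` out-neighbours (all below it) and at
most `m + (v - a)` (at most `v - a` in-neighbours, all above it), so the number of edges is at most
`∑ₐ min (a - 1) (m + (v - a))`, which is `33` for `v = 10`, `m = 3`. When `m + v < 2 * j` (here `j ≥ 7`) the
second bound is the smaller one at `j`, so a missing edge into `j` from above lowers the bound at `j`, and the
digraph has fewer than `33` edges. -/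

section Descending

variable {v : ℕ} {E : ℕ → ℕ → Prop} (hE : ∀ i j, E i j → 1 ≤ j ∧ j < i ∧ i ≤ v)
include hE

theorem outDeg_le_pred (a : ℕ) : outDeg E a ≤ a - 1 := by
  calc outDeg E a ≤ ((Finset.Ico 1 a : Finset ℕ) : Set ℕ).ncard := by
        refine Set.ncard_le_ncard (fun k hk => ?_) (Finset.finite_toSet _)
        have := hE a k hk
        simp only [Finset.coe_Ico, Set.mem_Ico]
        omega
    _ = a - 1 := by rw [Set.ncard_coe_finset, Nat.card_Ico]

theorem inDeg_le_sub (a : ℕ) : inDeg E a ≤ v - a := by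
  calc inDeg E a ≤ ((Finset.Ioc a v : Finset ℕ) : Set ℕ).ncard := by
        refine Set.ncard_le_ncard (fun k hk => ?_) (Finset.finite_toSet _)
        have := hE k a hk
        simp only [Finset.coe_Ioc, Set.mem_Ioc]
        omega
    _ = v - a := by rw [Set.ncard_coe_finset, Nat.card_Ioc]

theorem inDeg_lt_sub_of_not_edge {a i : ℕ} (hai : a < i) (hiv : i ≤ v) (hne : ¬E i a) :
    inDeg E a < v - a := by
  calc inDeg E a < ((Finset.Ioc a v : Finset ℕ) : Set ℕ).ncard := by
        refine Set.ncard_lt_ncard ⟨fun k hk => ?_, fun hsub => hne ?_⟩ (Finset.finite_toSet _)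
        · have := hE k a hk
          simp only [Finset.coe_Ioc, Set.mem_Ioc]
          omega
        · exact hsub (by simp only [Finset.coe_Ioc, Set.mem_Ioc]; omega)
    _ = v - a := by rw [Set.ncard_coe_finset, Nat.card_Ioc]

theorem ncard_edges_eq_sum_outDeg :
    {p : ℕ × ℕ | E p.1 p.2}.ncard = ∑ a ∈ Finset.Icc 1 v, outDeg E a := by
  classical
  have hedges : {p : ℕ × ℕ | E p.1 p.2} =
      ↑((Finset.Icc 1 v ×ˢ Finset.Icc 1 v).filter fun p => E p.1 p.2) := by
    ext ⟨a, b⟩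
    simp only [Set.mem_ofPred_eq, Finset.coe_filter, Finset.mem_product, Finset.mem_Icc]
    exact ⟨fun h => ⟨by have := hE a b h; omega, h⟩, fun h => h.2⟩
  have houtDeg : ∀ a, outDeg E a = ((Finset.Icc 1 v).filter (E a)).card := by
    intro a
    rw [outDeg, ← Set.ncard_coe_finset]
    congr 1
    ext b
    simp only [Set.mem_ofPred_eq, Finset.coe_filter, Finset.mem_Icc]
    exact ⟨fun h => ⟨by have := hE a b h; omega, h⟩, fun h => h.2⟩
  simp only [hedges, houtDeg, Set.ncard_coe_finset, Finset.card_filter, Finset.sum_product]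

end Descending

def edgeBound (v m : ℕ) : ℕ := ∑ a ∈ Finset.Icc 1 v, min (a - 1) (m + (v - a))

theorem MemClassD.outDeg_le_min {v m : ℕ} {E : ℕ → ℕ → Prop} (hD : MemClassD v m E) {a : ℕ}
    (ha : a ∈ Finset.Icc 1 v) : outDeg E a ≤ min (a - 1) (m + (v - a)) := by
  rw [Finset.mem_Icc] at ha
  have := hD.2 a ha.1 ha.2
  have := inDeg_le_sub hD.1 a
  exact le_min (outDeg_le_pred hD.1 a) (by omega)

theorem MemClassD.ncard_edges_lt_edgeBound {v m : ℕ} {E : ℕ → ℕ → Prop} (hD : MemClassD v m E)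
    {i j : ℕ} (hj : m + v < 2 * j) (hji : j < i) (hiv : i ≤ v) (hne : ¬E i j) :
    {p : ℕ × ℕ | E p.1 p.2}.ncard < edgeBound v m := by
  rw [ncard_edges_eq_sum_outDeg hD.1, edgeBound]
  refine Finset.sum_lt_sum (fun a ha => hD.outDeg_le_min ha) ⟨j, ?_, ?_⟩
  · rw [Finset.mem_Icc]; omega
  · have := hD.2 j (by omega) (by omega)
    have := inDeg_lt_sub_of_not_edge hD.1 hji hiv hne
    exact lt_min_iff.2 ⟨by omega, by omega⟩

theorem edgeBound_ten_three : edgeBound 10 3 = 33 := by decide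

/-- If `D` is a digraph in `𝒟_{10,3}` with exactly `33` edges, then
for all `i, j ∈ {7, 8, 9, 10}` with `i > j`, the edge from `i` to `j` is present in `D`. -/
theorem digraph_D10_3_with_33_edges (E : ℕ → ℕ → Prop)
    (hD : MemClassD 10 3 E)
    (hcard : {p : ℕ × ℕ | E p.1 p.2}.ncard = 33) :
    ∀ i j, 7 ≤ j → j < i → i ≤ 10 → E i j := by
  intro i j hj hji hi
  by_contra hne
  have := hD.ncard_edges_lt_edgeBound (by omega) hji hi hne
  rw [hcard, edgeBound_ten_three] at this
  exact lt_irrefl _ this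
end
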